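/- arXiv:1506.03497 — 5 statements merged into one kernel-verified Lean document; each statement's English description precedes it below -/
import Mathlib

section
/- Let p₁ be a prime with p₁ ≡ 3 (mod 4), and let m be a positive integer with m ≡ 1 (mod 4), p₁ | m, m ≤ p₁³, and such that every prime q with q ≡ 3 (mod 4) and q | m satisfies q ≥ p₁. Then there exist a positive integer a and a prime p₂ such that m = a·p₁·p₂, p₂ ≡ 3 (mod 4), p₁ ≤ p₂, every prime factor of a is congruent to 1 modulo 4, and a < p₁. -/
lemma exists_prime_3mod4 : ∀ n : ℕ, n % 4 = 3 → ∃ q, q.Prime ∧ q % 4 = 3 ∧ q ∣ n := by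
  intro n
  induction n using Nat.strong_induction_on with
  | _ n ih =>
    intro h
    have hn1 : n ≠ 1 := by omega
    have hpf : n.minFac.Prime := Nat.minFac_prime hn1
    have hdvd : n.minFac ∣ n := Nat.minFac_dvd n
    have hodd : n % 2 = 1 := by omega
    have h2 : n.minFac ≠ 2 := by
      intro h2
      rw [h2] at hdvd
      omega
    have hoddp : n.minFac % 2 = 1 := Nat.Prime.eq_two_or_odd hpf |>.resolve_left h2
    -- minFac % 4 is 1 or 3
    rcases Nat.lt_or_ge (n.minFac % 4) 3 with hc | hc
    · -- then minFac % 4 = 1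
      have hmod1 : n.minFac % 4 = 1 := by omega
      obtain ⟨k, hk⟩ := hdvd
      have hk3 : k % 4 = 3 := by
        have := Nat.mul_mod n.minFac k 4
        rw [← hk, hmod1] at this
        omega
      have hklt : k < n := by
        have hp2 : 2 ≤ n.minFac := hpf.two_le
        have hk0 : 0 < k := by
          rcases Nat.eq_zero_or_pos k with h0 | h0
          · omega
          · exact h0
        calc k < n.minFac * k := by nlinarith
        _ = n := hk.symm
      obtain ⟨q, hq1, hq2, hq3⟩ := ih k hklt hk3
      exact ⟨q, hq1, hq2, hq3.trans (dvd_of_mul_left_eq n.minFac hk.symm)⟩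
    · have : n.minFac % 4 = 3 := by omega
      exact ⟨n.minFac, hpf, this, hdvd⟩

/-- Structure of an integer `m ≡ 1 (mod 4)` with `p₁ ∣ m`, `m ≤ p₁³`, all of whose prime
factors `≡ 3 (mod 4)` are at least `p₁`: it factors as `m = a·p₁·p₂` with `p₂ ≡ 3 (mod 4)`
prime, `p₁ ≤ p₂`, all prime factors of `a` congruent to `1 (mod 4)`, and `a < p₁`. -/
theorem stmt10 (p₁ m : ℕ) (hp : p₁.Prime) (hp3 : p₁ % 4 = 3) (hm : 0 < m)
    (hm1 : m % 4 = 1) (hdvd : p₁ ∣ m) (hle : m ≤ p₁ ^ 3)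
    (hmin : ∀ q : ℕ, q.Prime → q % 4 = 3 → q ∣ m → p₁ ≤ q) :
    ∃ (a p₂ : ℕ), 0 < a ∧ p₂.Prime ∧ m = a * p₁ * p₂ ∧ p₂ % 4 = 3 ∧ p₁ ≤ p₂ ∧
      (∀ q : ℕ, q.Prime → q ∣ a → q % 4 = 1) ∧ a < p₁ := by
  obtain ⟨n, hn⟩ := hdvd
  have hn3 : n % 4 = 3 := by
    have := Nat.mul_mod p₁ n 4
    rw [← hn, hp3, hm1] at this
    omega
  obtain ⟨p₂, hp₂, hp₂3, hp₂dvd⟩ := exists_prime_3mod4 n hn3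
  obtain ⟨a, ha⟩ := hp₂dvd
  have hmeq : m = a * p₁ * p₂ := by rw [hn, ha]; ring
  have hp₂m : p₂ ∣ m := ⟨a * p₁, by rw [hmeq]; ring⟩
  have hle₂ : p₁ ≤ p₂ := hmin p₂ hp₂ hp₂3 hp₂m
  have ha0 : 0 < a := by
    rcases Nat.eq_zero_or_pos a with h0 | h0
    · subst h0; rw [hmeq] at hm; simp at hm
    · exact h0
  have hnotcube : m ≠ p₁ ^ 3 := by
    intro hcube
    have := Nat.pow_mod p₁ 3 4
    rw [← hcube, hp3, hm1] at this
    omega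
  have key : ∀ r : ℕ, p₁ ≤ r → r ≤ a → False := by
    intro r hr hra
    have h1 : p₁ * p₁ * p₁ ≤ a * p₁ * p₂ := by
      have hp0 : 0 < p₁ := hp.pos
      have hpa : p₁ ≤ a := le_trans hr hra
      exact Nat.mul_le_mul (Nat.mul_le_mul hpa (le_refl p₁)) hle₂
    have : m = p₁ ^ 3 := by
      rw [hmeq]
      have : p₁ ^ 3 ≤ a * p₁ * p₂ := by rw [pow_succ, pow_succ, pow_one]; exact h1
      omega
    exact hnotcube this
  have hodd : m % 2 = 1 := by omega
  refine ⟨a, p₂, ha0, hp₂, hmeq, hp₂3, hle₂, ?_, ?_⟩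
  · intro q hq hqa
    have hqm : q ∣ m := hqa.trans ⟨p₁ * p₂, by rw [hmeq]; ring⟩
    have hq2 : q ≠ 2 := by
      intro h2
      rw [h2] at hqm
      omega
    have hqodd : q % 2 = 1 := hq.eq_two_or_odd.resolve_left hq2
    rcases Nat.lt_or_ge (q % 4) 3 with hc | hc
    · omega
    · have hq3 : q % 4 = 3 := by omega
      have hqp : p₁ ≤ q := hmin q hq hq3 hqm
      have hqa' : q ≤ a := Nat.le_of_dvd ha0 hqa
      exact absurd (key q hqp hqa') (fun h => h)
  · by_contra h
    exact key p₁ (le_refl _) (by omega)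
end

section
/- For every positive integer k, if 6k+1, 12k+1 and 18k+1 are all prime, then n = (6k+1)(12k+1)(18k+1) is a Carmichael number. -/
/-- A Carmichael number: a composite positive integer `n` such that
`a ^ n ≡ a (mod n)` for every integer `a`. -/
def IsCarmichael (n : ℕ) : Prop :=
  1 < n ∧ ¬ n.Prime ∧ ∀ a : ℤ, (n : ℤ) ∣ a ^ n - a

lemma key_div (p n : ℕ) (hp : p.Prime) (hn : 1 ≤ n) (hd : (p - 1) ∣ (n - 1)) (a : ℤ) :
    (p : ℤ) ∣ a ^ n - a := by
  haveI := Fact.mk hp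
  have : ((a ^ n - a : ℤ) : ZMod p) = 0 := by
    push_cast
    have key : (a : ZMod p) ^ n = (a : ZMod p) := by
      by_cases hb : (a : ZMod p) = 0
      · rw [hb, zero_pow (by omega)]
      · obtain ⟨t, ht⟩ := hd
        have hn' : n = (p - 1) * t + 1 := by omega
        rw [hn', pow_succ, pow_mul, ZMod.pow_card_sub_one_eq_one hb, one_pow, one_mul]
    rw [key, sub_self]
  exact (ZMod.intCast_zmod_eq_zero_iff_dvd _ _).mp this

/-- If `6k+1`, `12k+1` and `18k+1` are simultaneously prime, then their product is
a Carmichael number. -/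
theorem stmt13 (k : ℕ) (hk : 0 < k)
    (h1 : Nat.Prime (6 * k + 1)) (h2 : Nat.Prime (12 * k + 1))
    (h3 : Nat.Prime (18 * k + 1)) :
    IsCarmichael ((6 * k + 1) * (12 * k + 1) * (18 * k + 1)) := by
  set n := (6 * k + 1) * (12 * k + 1) * (18 * k + 1) with hn
  have hexp : n = 36 * k * (36 * k ^ 2 + 11 * k + 1) + 1 := by rw [hn]; ring
  have hn1 : 1 ≤ n := by omega
  have hsub : n - 1 = 36 * k * (36 * k ^ 2 + 11 * k + 1) := by omega
  refine ⟨by nlinarith, ?_, ?_⟩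
  · exact Nat.not_prime_mul (by nlinarith) (by omega)
  · intro a
    have d1 : ((6 * k + 1 : ℕ) : ℤ) ∣ a ^ n - a := by
      refine key_div _ _ h1 hn1 ?_ a
      have e : 6 * k + 1 - 1 = 6 * k := by omega
      rw [hsub, e]
      exact ⟨6 * (36 * k ^ 2 + 11 * k + 1), by ring⟩
    have d2 : ((12 * k + 1 : ℕ) : ℤ) ∣ a ^ n - a := by
      refine key_div _ _ h2 hn1 ?_ a
      have e : 12 * k + 1 - 1 = 12 * k := by omega
      rw [hsub, e]
      exact ⟨3 * (36 * k ^ 2 + 11 * k + 1), by ring⟩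
    have d3 : ((18 * k + 1 : ℕ) : ℤ) ∣ a ^ n - a := by
      refine key_div _ _ h3 hn1 ?_ a
      have e : 18 * k + 1 - 1 = 18 * k := by omega
      rw [hsub, e]
      exact ⟨2 * (36 * k ^ 2 + 11 * k + 1), by ring⟩
    have c12 : IsCoprime ((6 * k + 1 : ℕ) : ℤ) ((12 * k + 1 : ℕ) : ℤ) :=
      Nat.isCoprime_iff_coprime.mpr ((Nat.coprime_primes h1 h2).mpr (by omega))
    have c13 : IsCoprime ((6 * k + 1 : ℕ) : ℤ) ((18 * k + 1 : ℕ) : ℤ) :=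
      Nat.isCoprime_iff_coprime.mpr ((Nat.coprime_primes h1 h3).mpr (by omega))
    have c23 : IsCoprime ((12 * k + 1 : ℕ) : ℤ) ((18 * k + 1 : ℕ) : ℤ) :=
      Nat.isCoprime_iff_coprime.mpr ((Nat.coprime_primes h2 h3).mpr (by omega))
    have d12 : ((6 * k + 1 : ℕ) * (12 * k + 1 : ℕ) : ℤ) ∣ a ^ n - a :=
      c12.mul_dvd d1 d2
    have c : IsCoprime ((6 * k + 1 : ℕ) * (12 * k + 1 : ℕ) : ℤ) ((18 * k + 1 : ℕ) : ℤ) :=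
      (IsCoprime.mul_left c13 c23)
    have := c.mul_dvd d12 d3
    rw [hn]
    push_cast
    push_cast at this
    convert this using 2
end

section
/- A₁·A₃ < π²/6, i.e., the product of ∏_{p ≡ 1 (mod 4)} (1 + 1/(p(p−1))) and ∏_{p ≡ 3 (mod 4)} (1 + 1/(p(p−2))) over primes p is strictly less than π²/6. -/
/-- `A₁ := ∏_{p ≡ 1 (mod 4)} (1 + 1/(p(p-1)))`. -/
noncomputable def Aone : ℝ :=
  ∏' p : {p : ℕ // p.Prime ∧ p % 4 = 1}, (1 + 1 / ((p : ℕ) * ((p : ℕ) - 1) : ℝ))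

/-- `A₃ := ∏_{p ≡ 3 (mod 4)} (1 + 1/(p(p-2)))`. -/
noncomputable def Athree : ℝ :=
  ∏' p : {p : ℕ // p.Prime ∧ p % 4 = 3}, (1 + 1 / ((p : ℕ) * ((p : ℕ) - 2) : ℝ))

/-!
Bound each factor by `1 + x ≤ exp x`. Since `p (p - 1) ≥ p (p - 2)` and the primes of both classes
are distinct odd numbers `≥ 3`, this gives `log (A₁ A₃) ≤ log (4/3) + ∑_{n odd, n ≥ 5} 1 / (n (n - 2))`,
keeping the factor `4/3` of `p = 3` exactly. The series telescopes to `1/6`, and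
`4/3 · exp (1/6) < 4/3 · 6/5 = 8/5 < π² / 6`.
-/

open Real Filter Topology

theorem tprod_le_exp_tsum {ι : Type*} {f b : ι → ℝ} (hf : ∀ i, 1 ≤ f i)
    (hfb : ∀ i, f i ≤ exp (b i)) (hb : Summable b) : ∏' i, f i ≤ exp (∑' i, b i) := by
  have hf0 (i : ι) : 0 < f i := one_pos.trans_le (hf i)
  have hlog (i : ι) : log (f i) ≤ b i := (log_le_iff_le_exp (hf0 i)).2 (hfb i)
  have hsum : Summable fun i => log (f i) :=
    hb.of_nonneg_of_le (fun i => log_nonneg (hf i)) hlog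
  have hprod : HasProd f (exp (∑' i, log (f i))) := by
    simpa [Function.comp_def, exp_log (hf0 _)] using hsum.hasSum.rexp
  rw [hprod.tprod_eq]
  exact exp_le_exp.2 (hsum.tsum_le_tsum hlog hb)

theorem hasSum_sub_succ_of_antitone {f : ℕ → ℝ} {l : ℝ} (hf : Antitone f)
    (hl : Tendsto f atTop (𝓝 l)) : HasSum (fun n => f n - f (n + 1)) (f 0 - l) := by
  refine (hasSum_iff_tendsto_nat_of_nonneg (fun n => sub_nonneg.2 (hf n.le_succ)) _).2 ?_
  simp only [Finset.sum_range_sub']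
  exact tendsto_const_nhds.sub hl

theorem tsum_add_tsum_le_of_disjoint {ι : Type*} {f : ι → ℝ} (hf0 : ∀ i, 0 ≤ f i)
    (hf : Summable f) {s t : Set ι} (hst : Disjoint s t) :
    ∑' i : s, f i + ∑' i : t, f i ≤ ∑' i, f i := by
  rw [← (hf.subtype s).tsum_union_disjoint hst (hf.subtype t)]
  exact Summable.tsum_subtype_le f _ hf0 hf

noncomputable def oddTerm (n : ℕ) : ℝ := if Odd n ∧ 5 ≤ n then 1 / (n * (n - 2)) else 0

theorem oddTerm_two_mul_add_five (k : ℕ) :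
    oddTerm (2 * k + 5) = 1 / (4 * k + 6) - 1 / (4 * (k + 1 : ℕ) + 6) := by
  rw [oddTerm, if_pos ⟨⟨k + 2, by ring⟩, by omega⟩]
  push_cast
  rw [show (2 * k + 5 : ℝ) - 2 = 2 * k + 3 by ring]
  field_simp
  ring

theorem hasSum_oddTerm : HasSum oddTerm (1 / 6) := by
  have hinj : Function.Injective fun k : ℕ => 2 * k + 5 := fun a b h => by simp at h; omega
  have hsupp : ∀ n ∉ Set.range fun k : ℕ => 2 * k + 5, oddTerm n = 0 := by
    intro n hn
    rw [oddTerm, if_neg]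
    rintro ⟨⟨m, rfl⟩, h5⟩
    exact hn ⟨m - 2, by dsimp only; omega⟩
  have hanti : Antitone fun k : ℕ => 1 / (4 * k + 6 : ℝ) := fun a b h => by dsimp only; gcongr
  have hlim : Tendsto (fun k : ℕ => 1 / (4 * k + 6 : ℝ)) atTop (𝓝 0) := by
    simp only [one_div]
    exact tendsto_inv_atTop_zero.comp (tendsto_atTop_add_const_right _ 6
      (tendsto_natCast_atTop_atTop.const_mul_atTop four_pos))
  rw [← hinj.hasSum_iff hsupp]
  convert hasSum_sub_succ_of_antitone hanti hlim using 1
  · exact funext oddTerm_two_mul_add_five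
  · norm_num

/-- Dominates `log (1 + 1 / (n * (n - 2)))` on odd `n ≥ 3`; at `n = 3` it must be the exact value,
since the linear bound `1 / (n * (n - 2)) = 1` would be far too lossy there. -/
noncomputable def oddWeight : ℕ → ℝ := Function.update oddTerm 3 (log (4 / 3))

theorem hasSum_oddWeight : HasSum oddWeight (log (4 / 3) + 1 / 6) := by
  have h := hasSum_oddTerm.update 3 (log (4 / 3))
  rwa [show oddTerm 3 = 0 by simp [oddTerm], sub_zero] at h

theorem oddWeight_nonneg (n : ℕ) : 0 ≤ oddWeight n := by
  rcases eq_or_ne n 3 with rfl | hn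
  · simpa [oddWeight] using log_nonneg (by norm_num : (1 : ℝ) ≤ 4 / 3)
  · rw [oddWeight, Function.update_of_ne hn, oddTerm]
    split_ifs with h
    · have : (5 : ℝ) ≤ n := by exact_mod_cast h.2
      exact one_div_nonneg.2 (by nlinarith)
    · exact le_rfl

theorem one_add_one_div_le_exp_oddWeight {n : ℕ} (hn : Odd n) (h3 : 3 ≤ n) :
    1 + 1 / (n * (n - 2) : ℝ) ≤ exp (oddWeight n) := by
  rcases eq_or_ne n 3 with rfl | hn3
  · rw [oddWeight, Function.update_self, exp_log (by norm_num)]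
    norm_num
  · have h5 : 5 ≤ n := by obtain ⟨m, rfl⟩ := hn; omega
    rw [oddWeight, Function.update_of_ne hn3, oddTerm, if_pos ⟨hn, h5⟩, add_comm]
    exact add_one_le_exp _

theorem tprod_one_add_le_exp_tsum_oddWeight {s : Set ℕ} (hs : ∀ n ∈ s, Odd n ∧ 3 ≤ n) {c : ℝ}
    (hc : c ≤ 2) :
    0 ≤ ∏' n : s, (1 + 1 / (n * (n - c) : ℝ)) ∧
      ∏' n : s, (1 + 1 / (n * (n - c) : ℝ)) ≤ exp (∑' n : s, oddWeight n) := by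
  have hpos (n : s) : 0 < (n * (n - 2) : ℝ) := by
    have : (3 : ℝ) ≤ n := by exact_mod_cast (hs n n.2).2
    nlinarith
  have hle (n : s) : 1 / (n * (n - c) : ℝ) ≤ 1 / (n * (n - 2)) :=
    one_div_le_one_div_of_le (hpos n) (by gcongr)
  have hone (n : s) : 1 ≤ 1 + 1 / (n * (n - c) : ℝ) :=
    le_add_of_nonneg_right (one_div_nonneg.2 ((hpos n).le.trans (by gcongr)))
  refine ⟨tprod_nonneg fun n => zero_le_one.trans (hone n), tprod_le_exp_tsum hone (fun n => ?_)
    (hasSum_oddWeight.summable.subtype s)⟩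
  exact (add_le_add le_rfl (hle n)).trans
    (one_add_one_div_le_exp_oddWeight (hs n n.2).1 (hs n n.2).2)

theorem four_thirds_mul_exp_one_sixth_lt : 4 / 3 * exp (1 / 6) < π ^ 2 / 6 := by
  have hexp : exp (1 / 6) < 6 / 5 := by
    have := exp_bound_div_one_sub_of_interval' (x := 1 / 6) (by norm_num) (by norm_num)
    norm_num at this ⊢
    exact this
  nlinarith [pi_gt_d2]

/-- `A₁ · A₃ < π² / 6`. -/
theorem stmt16 : Aone * Athree < Real.pi ^ 2 / 6 := by
  have hmod (r : ℕ) (hr : r % 4 = 1 ∨ r % 4 = 3) :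
      ∀ p ∈ {p : ℕ | p.Prime ∧ p % 4 = r}, Odd p ∧ 3 ≤ p := fun p ⟨hp, hpr⟩ =>
    have := hp.two_le
    ⟨Nat.odd_iff.2 (by omega), by omega⟩
  obtain ⟨-, hA1⟩ := tprod_one_add_le_exp_tsum_oddWeight (hmod 1 (.inl rfl)) one_le_two
  obtain ⟨hA3_nonneg, hA3⟩ := tprod_one_add_le_exp_tsum_oddWeight (hmod 3 (.inr rfl)) le_rfl
  have hdisj : Disjoint {p : ℕ | p.Prime ∧ p % 4 = 1} {p : ℕ | p.Prime ∧ p % 4 = 3} :=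
    Set.disjoint_left.2 fun p h1 h3 => by simp_all
  calc Aone * Athree
      ≤ exp (∑' p : {p : ℕ | p.Prime ∧ p % 4 = 1}, oddWeight p) *
          exp (∑' p : {p : ℕ | p.Prime ∧ p % 4 = 3}, oddWeight p) :=
        mul_le_mul hA1 hA3 hA3_nonneg (exp_pos _).le
    _ ≤ exp (log (4 / 3) + 1 / 6) := by
        rw [← exp_add, ← hasSum_oddWeight.tsum_eq]
        exact exp_le_exp.2 (tsum_add_tsum_le_of_disjoint oddWeight_nonneg
          hasSum_oddWeight.summable hdisj)
    _ = 4 / 3 * exp (1 / 6) := by rw [exp_add, exp_log (by norm_num)]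
    _ < π ^ 2 / 6 := four_thirds_mul_exp_one_sixth_lt
end

section
/- (1/√2)·∏_{p ≡ 3 (mod 4)} (1 − p^{−2})^{−1/2} = (π/4)·∏_{p ≡ 1 (mod 4)} (1 − p^{−2})^{1/2}, the (convergent) products being over primes p; i.e., the two standard expressions for the Landau–Ramanujan constant B are equal. -/
/-!
By the Euler product for `ζ(2)`, `∏_p (1 - p⁻²) = 6/π²`. The factor at `p = 2` is `3/4`, so the
products `P₁, P₃` of `1 - p⁻²` over the primes `≡ 1` and `≡ 3 (mod 4)` satisfy `P₁ P₃ = 8/π²`,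
and the claimed identity `P₃^{-1/2}/√2 = (π/4) P₁^{1/2}` is a rearrangement of this.
All partial products converge because `∑ log (1 - n⁻²)` converges absolutely; this also makes
them positive and lets `x ↦ x ^ r` pass through them.
-/

open Real

lemma Real.tprod_pos_of_summable_log {ι : Type*} {f : ι → ℝ} (hf : ∀ i, 0 < f i)
    (hlog : Summable fun i => log (f i)) : 0 < ∏' i, f i :=
  rexp_tsum_eq_tprod hf hlog ▸ exp_pos _

lemma Real.tprod_rpow_of_summable_log {ι : Type*} {f : ι → ℝ} (hf : ∀ i, 0 < f i)
    (hlog : Summable fun i => log (f i)) (r : ℝ) :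
    ∏' i, f i ^ r = (∏' i, f i) ^ r := by
  have hlog_rpow : Summable fun i => log (f i ^ r) := by
    simpa only [log_rpow (hf _), mul_comm r] using hlog.mul_right r
  rw [← rexp_tsum_eq_tprod hf hlog,
    ← rexp_tsum_eq_tprod (fun i => rpow_pos_of_pos (hf i) r) hlog_rpow, ← exp_mul]
  simp only [log_rpow (hf _), mul_comm r, tsum_mul_right]

lemma one_sub_one_div_sq_pos {x : ℝ} (hx : 1 < x) : 0 < 1 - 1 / x ^ 2 := by
  rw [sub_pos, div_lt_one (by positivity)]
  exact one_lt_pow₀ hx two_ne_zero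

lemma summable_log_one_sub_one_div_sq : Summable fun n : ℕ => log (1 - 1 / (n : ℝ) ^ 2) := by
  simpa [sub_eq_add_neg] using
    Real.summable_log_one_add_of_summable hasSum_zeta_two.summable.neg

lemma hasProd_primes_one_sub_one_div_sq :
    HasProd (fun p : Nat.Primes => 1 - 1 / (p : ℝ) ^ 2) (6 / π ^ 2) := by
  let f : ℕ →*₀ ℝ :=
    (invMonoidWithZeroHom.comp (powMonoidWithZeroHom two_ne_zero)).comp
      (Nat.castRingHom ℝ).toMonoidWithZeroHom
  have hf (n : ℕ) : f n = 1 / (n : ℝ) ^ 2 := (one_div _).symm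
  have hsum : Summable (‖f ·‖) := by simp [hf]
  have htsum : ∑' n, f n = π ^ 2 / 6 := by rw [tsum_congr hf, hasSum_zeta_two.tsum_eq]
  have := EulerProduct.eulerProduct_completely_multiplicative_hasProd hsum
  rw [htsum] at this
  simpa [hf] using this.inv₀ (by positivity)

lemma multipliable_one_sub_one_div_sq {s : Set ℕ} (hs : ∀ n ∈ s, 1 < n) :
    Multipliable fun n : s => 1 - 1 / (n : ℝ) ^ 2 :=
  Real.multipliable_of_summable_log
    (fun n => one_sub_one_div_sq_pos (by exact_mod_cast hs n n.2))
    (summable_log_one_sub_one_div_sq.subtype s)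

lemma setOf_prime_eq_two_union_mod_four :
    {p : ℕ | p.Prime} = {2} ∪ ({p | p.Prime ∧ p % 4 = 1} ∪ {p | p.Prime ∧ p % 4 = 3}) := by
  ext p
  simp only [Set.mem_ofPred_eq, Set.mem_union, Set.mem_singleton_iff]
  constructor
  · intro hp
    rcases hp.eq_two_or_odd with h2 | hodd
    · exact .inl h2
    · rcases Nat.odd_mod_four_iff.mp hodd with h | h
      exacts [.inr (.inl ⟨hp, h⟩), .inr (.inr ⟨hp, h⟩)]
  · rintro (rfl | ⟨hp, -⟩ | ⟨hp, -⟩)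
    exacts [Nat.prime_two, hp, hp]

lemma tprod_one_sub_one_div_sq_mod_four_one_mul_mod_four_three :
    (∏' p : {p : ℕ // p.Prime ∧ p % 4 = 1}, (1 - 1 / (p : ℝ) ^ 2)) *
      ∏' p : {p : ℕ // p.Prime ∧ p % 4 = 3}, (1 - 1 / (p : ℝ) ^ 2) = 8 / π ^ 2 := by
  have hmul {s : Set ℕ} (hs : s ⊆ {p | p.Prime}) :=
    multipliable_one_sub_one_div_sq fun n hn => (hs hn).one_lt
  have h : ∏' p : {p : ℕ | p.Prime}, (1 - 1 / (p : ℝ) ^ 2) = 6 / π ^ 2 :=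
    hasProd_primes_one_sub_one_div_sq.tprod_eq
  have hd13 : Disjoint {p : ℕ | p.Prime ∧ p % 4 = 1} {p | p.Prime ∧ p % 4 = 3} :=
    Set.disjoint_left.mpr fun p h1 h3 => by simp_all
  have hd2 : Disjoint {2} ({p : ℕ | p.Prime ∧ p % 4 = 1} ∪ {p | p.Prime ∧ p % 4 = 3}) := by
    simp
  rw [setOf_prime_eq_two_union_mod_four,
    Multipliable.tprod_union_disjoint (f := fun n : ℕ => 1 - 1 / (n : ℝ) ^ 2) hd2
      (hmul (Set.singleton_subset_iff.mpr Nat.prime_two)) (hmul fun p hp => hp.elim And.left And.left),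
    Multipliable.tprod_union_disjoint (f := fun n : ℕ => 1 - 1 / (n : ℝ) ^ 2) hd13
      (hmul fun p hp => hp.1) (hmul fun p hp => hp.1),
    tprod_singleton 2 fun n : ℕ => 1 - 1 / (n : ℝ) ^ 2] at h
  rw [show (1 : ℝ) - 1 / ((2 : ℕ) : ℝ) ^ 2 = 3 / 4 by norm_num] at h
  change (∏' p : ({p : ℕ | p.Prime ∧ p % 4 = 1} : Set ℕ), _) *
    ∏' p : ({p : ℕ | p.Prime ∧ p % 4 = 3} : Set ℕ), _ = _
  linear_combination (4 / 3 : ℝ) * h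

lemma one_div_sqrt_two_mul_rpow_neg_half_eq {x y : ℝ} (hy : 0 < y) (hxy : x * y = 8 / π ^ 2) :
    1 / √2 * y ^ (-(1 / 2) : ℝ) = π / 4 * x ^ (1 / 2 : ℝ) := by
  have h : π * (√2 * √x * √y) = 4 := by
    rw [← sqrt_mul (by norm_num), ← sqrt_mul' _ hy.le, mul_assoc, hxy,
      show 2 * (8 / π ^ 2) = (4 / π) ^ 2 by ring, sqrt_sq (by positivity)]
    field_simp [pi_ne_zero]
  rw [rpow_neg hy.le, ← sqrt_eq_rpow, ← sqrt_eq_rpow]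
  have : 0 < √y := sqrt_pos.mpr hy
  field_simp
  linear_combination -h

/-- The two standard expressions for the Landau–Ramanujan constant agree:
`(1/√2)·∏_{p ≡ 3 (mod 4)} (1 - p⁻²)^{-1/2} = (π/4)·∏_{p ≡ 1 (mod 4)} (1 - p⁻²)^{1/2}`. -/
theorem stmt17 :
    (1 / Real.sqrt 2) *
      ∏' p : {p : ℕ // p.Prime ∧ p % 4 = 3}, (1 - 1 / ((p : ℕ) : ℝ) ^ 2) ^ (-(1 / 2) : ℝ) =
    (Real.pi / 4) *
      ∏' p : {p : ℕ // p.Prime ∧ p % 4 = 1}, (1 - 1 / ((p : ℕ) : ℝ) ^ 2) ^ ((1 / 2 : ℝ)) := by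
  have hpos {r : ℕ} (p : {p : ℕ // p.Prime ∧ p % 4 = r}) : 0 < 1 - 1 / ((p : ℕ) : ℝ) ^ 2 :=
    one_sub_one_div_sq_pos (by exact_mod_cast p.2.1.one_lt)
  have hlog {r : ℕ} : Summable fun p : {p : ℕ // p.Prime ∧ p % 4 = r} =>
      log (1 - 1 / ((p : ℕ) : ℝ) ^ 2) :=
    summable_log_one_sub_one_div_sq.subtype _
  rw [tprod_rpow_of_summable_log hpos hlog, tprod_rpow_of_summable_log hpos hlog]
  exact one_div_sqrt_two_mul_rpow_neg_half_eq (tprod_pos_of_summable_log hpos hlog)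
    tprod_one_sub_one_div_sq_mod_four_one_mul_mod_four_three
end

section
/- For every even positive integer n, ∏_{p prime, p ∤ n} (1 + 1/(p−1)²) < 3/2. -/
open Finset

noncomputable def ff (k : ℕ) : ℝ := 1 + 1 / ((k : ℝ) - 1) ^ 2

lemma ff_one_le (k : ℕ) : 1 ≤ ff k := by
  have h : 0 ≤ 1 / ((k : ℝ) - 1) ^ 2 := by positivity
  unfold ff; linarith

lemma one_le_prod_ff (s : Finset ℕ) : 1 ≤ ∏ i ∈ s, ff i := by
  induction s using Finset.cons_induction with
  | empty => simp
  | cons a s ha ih => rw [Finset.prod_cons]; nlinarith [ff_one_le a]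

lemma prod_ff_subset (s t : Finset ℕ) (h : s ⊆ t) : ∏ i ∈ s, ff i ≤ ∏ i ∈ t, ff i := by
  classical
  rw [← Finset.prod_sdiff h]
  nlinarith [one_le_prod_ff (t \ s), one_le_prod_ff s]

lemma tele (F : Finset ℕ) : ∀ a : ℕ, 7 ≤ a → (∀ k ∈ F, Odd k ∧ a ≤ k) →
    ∏ k ∈ F, ff k ≤ ((a : ℝ) + 1) / a := by
  induction F using Finset.strongInduction with
  | _ F ih =>
    intro a ha hF
    have ha' : (7 : ℝ) ≤ (a : ℝ) := by exact_mod_cast ha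
    rcases F.eq_empty_or_nonempty with rfl | hne
    · simp only [Finset.prod_empty]
      rw [le_div_iff₀ (by linarith)]; linarith
    · set m := F.min' hne with hm
      have hmF : m ∈ F := F.min'_mem hne
      have hm7 : 7 ≤ m := le_trans ha (hF m hmF).2
      have hmr : (7 : ℝ) ≤ (m : ℝ) := by exact_mod_cast hm7
      have hprod : ∏ k ∈ F, ff k = ff m * ∏ k ∈ F.erase m, ff k :=
        (Finset.mul_prod_erase F ff hmF).symm
      have herase : ∀ k ∈ F.erase m, Odd k ∧ m + 2 ≤ k := by
        intro k hk
        have hkF := Finset.mem_of_mem_erase hk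
        have hkne := Finset.ne_of_mem_erase hk
        have hk1 : m ≤ k := F.min'_le k hkF
        obtain ⟨r, hr⟩ := (hF k hkF).1
        obtain ⟨s, hs⟩ := (hF m hmF).1
        exact ⟨(hF k hkF).1, by omega⟩
      have h2 : ∏ k ∈ F.erase m, ff k ≤ ((m : ℝ) + 3) / ((m : ℝ) + 2) := by
        have := ih (F.erase m) (Finset.erase_ssubset hmF) (m + 2) (by omega) herase
        have hc : (((m + 2 : ℕ) : ℝ) + 1) / ((m + 2 : ℕ) : ℝ) = ((m : ℝ) + 3) / ((m : ℝ) + 2) := by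
          push_cast; ring_nf
        rwa [hc] at this
      have hffm : 0 ≤ ff m := le_trans zero_le_one (ff_one_le m)
      have hstep : ff m * (((m : ℝ) + 3) / ((m : ℝ) + 2)) ≤ ((m : ℝ) + 1) / (m : ℝ) := by
        unfold ff
        have hd1 : (0 : ℝ) < ((m : ℝ) - 1) ^ 2 := by nlinarith
        have he : (1 : ℝ) + 1 / ((m : ℝ) - 1) ^ 2 = (((m : ℝ) - 1) ^ 2 + 1) / ((m : ℝ) - 1) ^ 2 := by
          rw [add_div' 1 1 _ (ne_of_gt hd1), one_mul]
        rw [he, div_mul_div_comm, div_le_div_iff₀ (by positivity) (by positivity)]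
        nlinarith [sq_nonneg ((m : ℝ) - 1), sq_nonneg ((m : ℝ) - 7)]
      have hmono : ((m : ℝ) + 1) / (m : ℝ) ≤ ((a : ℝ) + 1) / (a : ℝ) := by
        have ham : (a : ℝ) ≤ (m : ℝ) := by exact_mod_cast (hF m hmF).2
        rw [div_le_div_iff₀ (by linarith) (by linarith)]
        nlinarith
      calc ∏ k ∈ F, ff k = ff m * ∏ k ∈ F.erase m, ff k := hprod
        _ ≤ ff m * (((m : ℝ) + 3) / ((m : ℝ) + 2)) := by
            exact mul_le_mul_of_nonneg_left h2 hffm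
        _ ≤ ((m : ℝ) + 1) / (m : ℝ) := hstep
        _ ≤ ((a : ℝ) + 1) / (a : ℝ) := hmono

lemma prime_prod (F : Finset ℕ) (hF : ∀ p ∈ F, p.Prime ∧ p ≠ 2) :
    ∏ k ∈ F, ff k ≤ 3145 / 2112 := by
  classical
  have hsplit := Finset.prod_inter_mul_prod_diff F ({3, 5, 7} : Finset ℕ) ff
  have h1 : ∏ k ∈ F ∩ {3, 5, 7}, ff k ≤ ∏ k ∈ ({3, 5, 7} : Finset ℕ), ff k := by
    exact prod_ff_subset _ _ Finset.inter_subset_right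
  have h1v : ∏ k ∈ ({3, 5, 7} : Finset ℕ), ff k = (5 / 4 : ℝ) * (17 / 16) * (37 / 36) := by
    rw [show ({3, 5, 7} : Finset ℕ) = {3, 5, 7} from rfl]
    norm_num [ff, Finset.prod_insert, Finset.mem_insert]
  have h2 : ∏ k ∈ F \ {3, 5, 7}, ff k ≤ 12 / 11 := by
    have := tele (F \ {3, 5, 7}) 11 (by norm_num) ?_
    · have hc : (((11 : ℕ) : ℝ) + 1) / ((11 : ℕ) : ℝ) = 12 / 11 := by norm_num
      rwa [hc] at this
    · intro k hk
      rw [Finset.mem_sdiff] at hk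
      obtain ⟨hkF, hknot⟩ := hk
      obtain ⟨hp, h2k⟩ := hF k hkF
      have hodd : Odd k := hp.odd_of_ne_two h2k
      refine ⟨hodd, ?_⟩
      simp only [Finset.mem_insert, Finset.mem_singleton] at hknot
      push_neg at hknot
      have h9 : k ≠ 9 := by rintro rfl; norm_num at hp
      have h1 : 2 ≤ k := hp.two_le
      have h3 : k ≠ 3 := hknot.1
      have h5 : k ≠ 5 := hknot.2.1
      have h7 : k ≠ 7 := hknot.2.2
      obtain ⟨r, hr⟩ := hodd
      omega
  have hpos1 : (0 : ℝ) ≤ ∏ k ∈ F ∩ {3, 5, 7}, ff k :=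
    Finset.prod_nonneg fun i _ => le_trans zero_le_one (ff_one_le i)
  have hpos2 : (1 : ℝ) ≤ ∏ k ∈ F \ {3, 5, 7}, ff k := by
    exact one_le_prod_ff _
  calc ∏ k ∈ F, ff k = (∏ k ∈ F ∩ {3, 5, 7}, ff k) * ∏ k ∈ F \ {3, 5, 7}, ff k := hsplit.symm
    _ ≤ ((5 / 4 : ℝ) * (17 / 16) * (37 / 36)) * (12 / 11) := by
        apply mul_le_mul (le_trans h1 (le_of_eq h1v)) h2 (by linarith) (by norm_num)
    _ ≤ 3145 / 2112 := by norm_num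

/-- For every even positive integer `n`, the product over primes `p ∤ n` of
`1 + 1/(p-1)²` is less than `3/2`. -/
theorem stmt19 (n : ℕ) (hn : 0 < n) (h2 : 2 ∣ n) :
    ∏' p : {p : ℕ // p.Prime ∧ ¬ p ∣ n}, (1 + 1 / ((p : ℕ) - 1 : ℝ) ^ 2) < 3 / 2 := by
  classical
  set f : {p : ℕ // p.Prime ∧ ¬ p ∣ n} → ℝ := fun p => 1 + 1 / (((p : ℕ) : ℝ) - 1) ^ 2 with hf
  by_cases hm : Multipliable f
  · have key : ∀ F : Finset {p : ℕ // p.Prime ∧ ¬ p ∣ n}, ∏ p ∈ F, f p ≤ 3145 / 2112 := by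
      intro F
      have hinj : Set.InjOn Subtype.val (F : Set {p : ℕ // p.Prime ∧ ¬ p ∣ n}) :=
        fun x _ y _ h => Subtype.ext h
      have heq : ∏ p ∈ F, f p = ∏ k ∈ F.image Subtype.val, ff k := by
        rw [Finset.prod_image (fun x hx y hy h => Subtype.ext h)]
        rfl
      rw [heq]
      apply prime_prod
      intro p hp
      simp only [Finset.mem_image] at hp
      obtain ⟨q, _, rfl⟩ := hp
      refine ⟨q.2.1, ?_⟩
      intro hq2
      exact q.2.2 (hq2 ▸ h2)
    have hle : ∏' p, f p ≤ 3145 / 2112 :=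
      le_of_tendsto hm.hasProd (Filter.Eventually.of_forall key)
    calc ∏' p, f p ≤ 3145 / 2112 := hle
      _ < 3 / 2 := by norm_num
  · rw [tprod_eq_one_of_not_multipliable hm]
    norm_num
end
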